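/- Let Γ be a finite simply-laced simply-connected graph (a tree with single edges) with vertex set I, and let Art_Γ be the associated Artin group with standard generators {t_i}. Let 0 → ℤ → Φ → Art_Γ → 1 be a central extension such that for every subset J ⊆ I of pairwise non-adjacent vertices, the pullback of the extension to the (abelian) subgroup generated by {t_j : j ∈ J} splits. Then the extension Φ splits, i.e. there is a group homomorphism Art_Γ → Φ that is a section of the projection. -/

import Mathlib

open SimpleGraph Walk

private def wt {I : Type*} {Γ : SimpleGraph I} (d : I → I → ℤ) {u v : I} (p : Γ.Walk u v) : ℤ :=
  (p.darts.map fun e => d e.fst e.snd).sum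

private lemma wt_concat {I : Type*} {Γ : SimpleGraph I} (d : I → I → ℤ) {u v w : I}
    (p : Γ.Walk u v) (h : Γ.Adj v w) : wt d (p.concat h) = wt d p + d v w := by
  simp [wt, Walk.darts_concat]

private lemma concat_isPath {I : Type*} {Γ : SimpleGraph I} {u v w : I}
    (p : Γ.Walk u v) (h : Γ.Adj v w) (hp : p.IsPath) (hw : w ∉ p.support) :
    (p.concat h).IsPath := by
  rw [← isPath_reverse_iff, reverse_concat]
  exact (isPath_reverse_iff p).2 hp |>.cons (by simpa using hw)

private lemma tree_potential {I : Type*} (Γ : SimpleGraph I) (hΓ : Γ.IsTree)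
    (d : I → I → ℤ) (hd : ∀ i j, Γ.Adj i j → d j i = - d i j) :
    ∃ m : I → ℤ, ∀ i j, Γ.Adj i j → m j - m i = d i j := by
  classical
  obtain ⟨r⟩ := hΓ.isConnected.nonempty
  choose P hP hP' using (hΓ.existsUnique_path r ·)
  refine ⟨fun i => wt d (P i), fun i j hadj => ?_⟩
  show wt d (P j) - wt d (P i) = d i j
  by_cases hj : j ∈ (P i).support
  · have hq : P j = (P i).takeUntil j hj := (hP' j _ ((hP i).takeUntil hj)).symm
    have hi : i ∉ ((P i).takeUntil j hj).support := by
      intro hin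
      have hspec := (P i).take_spec hj
      have hnd : (P i).support.Nodup := (hP i).support_nodup
      rw [← hspec, Walk.support_append] at hnd
      have hi2 : i ∈ ((P i).dropUntil j hj).support.tail := by
        have hi3 : i ∈ ((P i).dropUntil j hj).support := Walk.end_mem_support _
        rw [((P i).dropUntil j hj).support_eq_cons] at hi3
        rcases List.mem_cons.mp hi3 with h | h
        · exact absurd h.symm hadj.ne'
        · exact h
      exact (List.disjoint_of_nodup_append hnd) hin hi2
    have hi' : i ∉ (P j).support := by rw [hq]; exact hi
    have key : P i = (P j).concat hadj.symm :=
      (hP' i _ (concat_isPath _ hadj.symm (hP j) hi')).symm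
    rw [key, wt_concat, hd i j hadj]; ring
  · have key : P j = (P i).concat hadj := (hP' j _ (concat_isPath _ hadj (hP i) hj)).symm
    rw [key, wt_concat]; ring

private lemma cmm {G : Type*} [Group G] {c1 : G} (h1 : ∀ g, Commute c1 g) (x y c2 : G) :
    (x * c1) * (y * c2) = (x * y) * (c1 * c2) := by
  rw [show (x * c1) * (y * c2) = x * (c1 * y) * c2 by group, (h1 y).eq]
  group


/-- The defining relators of the Artin braid group of a simple graph `Γ`:
commutation relators for non-adjacent pairs of vertices, braid relators for
adjacent ones. -/
def artinRels {I : Type*} (Γ : SimpleGraph I) : Set (FreeGroup I) :=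
  {r | ∃ i j : I, i ≠ j ∧
    ((¬ Γ.Adj i j ∧
        r = FreeGroup.of i * FreeGroup.of j * (FreeGroup.of i)⁻¹ * (FreeGroup.of j)⁻¹) ∨
     (Γ.Adj i j ∧
        r = FreeGroup.of i * FreeGroup.of j * FreeGroup.of i *
            (FreeGroup.of j * FreeGroup.of i * FreeGroup.of j)⁻¹))}

/-- If `Γ` is a finite tree (a simply-laced, simply connected graph) and
`0 → ℤ → Φ → Art_Γ → 1` is a central extension which splits over every abelian
standard subgroup generated by standard generators indexed by pairwise
non-adjacent vertices, then the extension splits. -/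
theorem central_extension_of_tree_artin_group_splits {I : Type*} [Fintype I]
    (Γ : SimpleGraph I) (hΓ : Γ.IsTree)
    (Φ : Type*) [Group Φ] (ι : Multiplicative ℤ →* Φ) (p : Φ →* PresentedGroup (artinRels Γ))
    (hinj : Function.Injective ι) (hcent : ι.range ≤ Subgroup.center Φ)
    (hsurj : Function.Surjective p) (hker : p.ker = ι.range)
    (hsplit : ∀ J : Set I, (∀ i ∈ J, ∀ j ∈ J, i ≠ j → ¬ Γ.Adj i j) →
      ∃ s : Subgroup.closure
          ((fun i => (PresentedGroup.of i : PresentedGroup (artinRels Γ))) '' J) →* Φ,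
        ∀ x, p (s x) = (x : PresentedGroup (artinRels Γ))) :
    ∃ s : PresentedGroup (artinRels Γ) →* Φ, ∀ x, p (s x) = x := by
  classical
  -- relations hold in the presented group
  have hone : ∀ r ∈ artinRels Γ, PresentedGroup.mk (artinRels Γ) r = 1 := by
    intro r hr
    have : r ∈ Subgroup.normalClosure (artinRels Γ) := Subgroup.subset_normalClosure hr
    exact (QuotientGroup.eq_one_iff r).mpr this
  have hcomm_pg : ∀ i j : I, i ≠ j → ¬ Γ.Adj i j →
      (PresentedGroup.of i : PresentedGroup (artinRels Γ)) * PresentedGroup.of j =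
        PresentedGroup.of j * PresentedGroup.of i := by
    intro i j hij hna
    have h1 := hone _ ⟨i, j, hij, Or.inl ⟨hna, rfl⟩⟩
    simp only [map_mul, map_inv] at h1
    exact commutatorElement_eq_one_iff_mul_comm.mp h1
  have hbraid_pg : ∀ i j : I, Γ.Adj i j →
      (PresentedGroup.of i : PresentedGroup (artinRels Γ)) * PresentedGroup.of j *
        PresentedGroup.of i =
      PresentedGroup.of j * PresentedGroup.of i * PresentedGroup.of j := by
    intro i j ha
    have h1 := hone _ ⟨i, j, ha.ne, Or.inr ⟨ha, rfl⟩⟩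
    simp only [map_mul, map_inv] at h1
    exact mul_inv_eq_one.mp h1
  -- lifts of the generators
  choose a hap using fun i : I => hsurj (PresentedGroup.of i)
  -- the image of ι commutes with everything
  have hC : ∀ (z : Multiplicative ℤ) (g : Φ), Commute (ι z) g := fun z g =>
    ((Subgroup.mem_center_iff.mp (hcent ⟨z, rfl⟩)) g).symm
  -- elements of the kernel of p are in the range of ι
  have hmemrange : ∀ g : Φ, p g = 1 → ∃ z : Multiplicative ℤ, ι z = g := by
    intro g hg
    have : g ∈ ι.range := by rw [← hker]; exact hg
    exact this
  -- commuting lifts for non-adjacent generators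
  have hacomm : ∀ i j : I, i ≠ j → ¬ Γ.Adj i j → Commute (a i) (a j) := by
    intro i j hij hna
    obtain ⟨s, hs⟩ := hsplit {i, j} (by
      rintro x hx y hy hxy
      simp only [Set.mem_insert_iff, Set.mem_singleton_iff] at hx hy
      rcases hx with rfl | rfl <;> rcases hy with rfl | rfl
      · exact absurd rfl hxy
      · exact fun h => hna h
      · exact fun h => hna h.symm
      · exact absurd rfl hxy)
    have hiS : (PresentedGroup.of i : PresentedGroup (artinRels Γ)) ∈
        Subgroup.closure ((fun i => (PresentedGroup.of i : PresentedGroup (artinRels Γ))) ''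
          ({i, j} : Set I)) := Subgroup.subset_closure ⟨i, by simp, rfl⟩
    have hjS : (PresentedGroup.of j : PresentedGroup (artinRels Γ)) ∈
        Subgroup.closure ((fun i => (PresentedGroup.of i : PresentedGroup (artinRels Γ))) ''
          ({i, j} : Set I)) := Subgroup.subset_closure ⟨j, by simp, rfl⟩
    set xi : Subgroup.closure ((fun i => (PresentedGroup.of i : PresentedGroup (artinRels Γ))) ''
      ({i, j} : Set I)) := ⟨_, hiS⟩
    set xj : Subgroup.closure ((fun i => (PresentedGroup.of i : PresentedGroup (artinRels Γ))) ''
      ({i, j} : Set I)) := ⟨_, hjS⟩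
    have hxc : xi * xj = xj * xi := Subtype.ext (hcomm_pg i j hij hna)
    have hsc : Commute (s xi) (s xj) := by
      unfold Commute SemiconjBy
      rw [← map_mul, ← map_mul, hxc]
    obtain ⟨z1, hz1⟩ := hmemrange (a i * (s xi)⁻¹) (by
      simp only [map_mul, map_inv, hap, hs]; exact mul_inv_cancel _)
    obtain ⟨z2, hz2⟩ := hmemrange (a j * (s xj)⁻¹) (by
      simp only [map_mul, map_inv, hap, hs]; exact mul_inv_cancel _)
    have e1 : a i = ι z1 * s xi := by rw [hz1]; group
    have e2 : a j = ι z2 * s xj := by rw [hz2]; group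
    rw [e1, e2]
    exact (hC z1 _).mul_left (((hC z2 (s xi)).symm).mul_right hsc)
  -- braid defects
  have hdef : ∀ i j : I, Γ.Adj i j →
      ∃ z : Multiplicative ℤ, ι z = a i * a j * a i * (a j * a i * a j)⁻¹ := by
    intro i j hadj
    refine hmemrange _ ?_
    simp only [map_mul, map_inv, hap]
    rw [hbraid_pg i j hadj]; group
  set d : I → I → ℤ := fun i j =>
    if h : Γ.Adj i j then Multiplicative.toAdd (hdef i j h).choose else 0 with hdd
  have hzd : ∀ i j (h : Γ.Adj i j),
      ι (Multiplicative.ofAdd (d i j)) = a i * a j * a i * (a j * a i * a j)⁻¹ := by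
    intro i j h
    rw [hdd]
    simp only [dif_pos h, ofAdd_toAdd]
    exact (hdef i j h).choose_spec
  have hdanti : ∀ i j, Γ.Adj i j → d j i = - d i j := by
    intro i j h
    have h1 := hzd i j h
    have h2 := hzd j i h.symm
    have : ι (Multiplicative.ofAdd (d j i)) = ι (Multiplicative.ofAdd (- d i j)) := by
      rw [h2, ofAdd_neg, map_inv, h1]; group
    have := hinj this
    simpa using congrArg Multiplicative.toAdd this
  obtain ⟨m, hm⟩ := tree_potential Γ hΓ d hdanti
  set c : I → Φ := fun i => ι (Multiplicative.ofAdd (m i)) with hcc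
  have hCc : ∀ i (g : Φ), Commute (c i) g := fun i g => hC _ g
  set b : I → Φ := fun i => a i * c i with hbb
  have hpc : ∀ i, p (c i) = 1 := by
    intro i
    have : c i ∈ p.ker := by rw [hker]; exact ⟨_, rfl⟩
    exact this
  have hpb : ∀ i, p (b i) = PresentedGroup.of i := by
    intro i
    rw [hbb]
    simp only [map_mul, hap, hpc, mul_one]
  -- commutation for the corrected lifts
  have hbcomm : ∀ i j : I, i ≠ j → ¬ Γ.Adj i j → b i * b j = b j * b i := by
    intro i j hij hna
    rw [hbb]
    simp only
    rw [cmm (hCc i) (a i) (a j) (c j), cmm (hCc j) (a j) (a i) (c i),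
      (hacomm i j hij hna).eq, (hC _ _).eq]
  -- braid relation for the corrected lifts
  have hbbraid : ∀ i j : I, Γ.Adj i j → b i * b j * b i = b j * b i * b j := by
    intro i j h
    have hD : a i * a j * a i = ι (Multiplicative.ofAdd (d i j)) * (a j * a i * a j) := by
      rw [hzd i j h]; group
    have harith : ι (Multiplicative.ofAdd (d i j)) * (c i * c j * c i) = c j * c i * c j := by
      rw [hcc]
      simp only [← map_mul, ← ofAdd_add]
      exact congrArg (fun t => ι (Multiplicative.ofAdd t)) (by linarith [hm i j h])
    rw [hbb]
    simp only
    rw [cmm (hCc i) (a i) (a j) (c j), cmm (fun g => (hCc i g).mul_left (hCc j g)) _ (a i) (c i),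
      cmm (hCc j) (a j) (a i) (c i), cmm (fun g => (hCc j g).mul_left (hCc i g)) _ (a j) (c j),
      hD, mul_assoc, (hC _ _).eq, ← mul_assoc, ← mul_assoc]
    have htail : (c i * c j) * c i * ι (Multiplicative.ofAdd (d i j)) = c j * c i * c j := by
      rw [← harith]
      exact ((hC _ (c i * c j * c i)).eq).symm
    have hassoc : a j * a i * a j * c i * c j * c i * ι (Multiplicative.ofAdd (d i j)) =
        a j * a i * a j * (c i * c j * c i * ι (Multiplicative.ofAdd (d i j))) := by group
    rw [hassoc, htail]
  -- the relations hold for b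
  have hrels : ∀ r ∈ artinRels Γ, FreeGroup.lift b r = 1 := by
    rintro r ⟨i, j, hij, ⟨hna, rfl⟩ | ⟨hadj, rfl⟩⟩
    · simp only [map_mul, map_inv, FreeGroup.lift_apply_of]
      rw [hbcomm i j hij hna]; group
    · simp only [map_mul, map_inv, FreeGroup.lift_apply_of]
      rw [hbbraid i j hadj]; group
  refine ⟨PresentedGroup.toGroup hrels, ?_⟩
  have : p.comp (PresentedGroup.toGroup hrels) = MonoidHom.id _ := by
    apply PresentedGroup.ext
    intro x
    simp only [MonoidHom.comp_apply, PresentedGroup.toGroup.of, MonoidHom.id_apply, hpb]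
  exact fun x => DFunLike.congr_fun this x
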